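/- For every n ≥ 1, the multiset of eigenvalues (with multiplicity) of the 2ⁿ×2ⁿ decoherence matrix D_{A₀^{(n)}} is {ρ_L^{(n)}, ρ_R^{(n)}} together with 0 with multiplicity 2ⁿ−2, where ρ_L^{(n)} = (1 + (p−q)^{n−1}(p₀−q₀))/2 and ρ_R^{(n)} = (1 − (p−q)^{n−1}(p₀−q₀))/2. -/

import Mathlib

open Matrix Filter
open scoped BigOperators Classical

noncomputable section

/-- Index in `Fin 2` of a direction: `false` ↔ `-1` (index `0`), `true` ↔ `1` (index `1`). -/
def bidx (b : Bool) : Fin 2 := if b then 1 else 0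

/-- The standard basis vector `e_j`, `j ∈ {-1,1}`, of `ℂ²`. -/
def eVec (b : Bool) : Fin 2 → ℂ := fun i => if i = bidx b then 1 else 0

/-- The projection `e_j e_j†`. -/
def projC (b : Bool) : Matrix (Fin 2) (Fin 2) ℂ :=
  Matrix.single (bidx b) (bidx b) 1

/-- `P_j = e_j e_j† U`. -/
def pMat (U : Matrix (Fin 2) (Fin 2) ℂ) (b : Bool) : Matrix (Fin 2) (Fin 2) ℂ :=
  projC b * U

/-- The weight of a path `ξ = (ξ_n, …, ξ_1)` (here `ξ i` is step `i+1`):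
`w(ξ) = P_{ξ_n} ⋯ P_{ξ_1} φ₀`. -/
def weight (U : Matrix (Fin 2) (Fin 2) ℂ) (φ₀ : Fin 2 → ℂ) {n : ℕ} (ξ : Fin n → Bool) :
    Fin 2 → ℂ :=
  ((List.ofFn fun i => pMat U (ξ i)).reverse.prod).mulVec φ₀

/-- The complex inner product `⟨v, w⟩`, conjugate-linear in the first slot. -/
def cdot (v w : Fin 2 → ℂ) : ℂ := ∑ i, (starRingEnd ℂ) (v i) * w i

/-- The decoherence matrix restricted to a set `A` of pairs of paths. -/
def decMat (U : Matrix (Fin 2) (Fin 2) ℂ) (φ₀ : Fin 2 → ℂ) {n : ℕ}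
    (A : Set ((Fin n → Bool) × (Fin n → Bool))) :
    Matrix (Fin n → Bool) (Fin n → Bool) ℂ :=
  Matrix.of fun ξ η =>
    if (ξ, η) ∈ A then cdot (weight U φ₀ ξ) (weight U φ₀ η) else 0

/-- `ξ_1 + ⋯ + ξ_n ∈ ℤ`, each step being `±1`. -/
def pathSum {n : ℕ} (ξ : Fin n → Bool) : ℤ := ∑ i, (if ξ i then 1 else -1)

/-- `A₀^{(n)}`: pairs of paths with the same final direction (paths have length `n+1`). -/
def A0 (n : ℕ) : Set ((Fin (n+1) → Bool) × (Fin (n+1) → Bool)) :=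
  {x | x.1 (Fin.last n) = x.2 (Fin.last n)}

/-- `A_P^{(n)}`: pairs of paths with the same final direction and the same endpoint. -/
def AP (n : ℕ) : Set ((Fin (n+1) → Bool) × (Fin (n+1) → Bool)) :=
  {x | x.1 (Fin.last n) = x.2 (Fin.last n) ∧ pathSum x.1 = pathSum x.2}

/-- `A₁^{(n)}`: the diagonal pairs. -/
def A1 (n : ℕ) : Set ((Fin (n+1) → Bool) × (Fin (n+1) → Bool)) :=
  {x | x.1 = x.2}

/-- The von Neumann entropy `S(D) = −Σᵢ λᵢ log₂ λᵢ`, summing over the eigenvalues with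
multiplicity (the roots of the characteristic polynomial; they are real for a PSD Hermitian
matrix), with the convention `0 · log₂ 0 = 0`. -/
def vnEntropy {I : Type*} [Fintype I] [DecidableEq I] (D : Matrix I I ℂ) : ℝ :=
  -((D.charpoly.roots).map fun lam => lam.re * Real.logb 2 lam.re).sum

/-- The real projection `e_j e_j†`. -/
def projR (b : Bool) : Matrix (Fin 2) (Fin 2) ℝ :=
  Matrix.single (bidx b) (bidx b) 1

/-- The stochastic matrix `M = [[p, q], [q, p]]` of the correlated random walk, `q = 1 − p`. -/
def rwM (p : ℝ) : Matrix (Fin 2) (Fin 2) ℝ := !![p, 1-p; 1-p, p]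

/-- The initial vector `φ = (q₀, p₀)ᵀ` of the correlated random walk, `q₀ = 1 − p₀`. -/
def rwφ (p₀ : ℝ) : Fin 2 → ℝ := ![1 - p₀, p₀]

/-- `P̃_{ξ_n} ⋯ P̃_{ξ_2} φ_{ξ_1}`, where `P̃_j = e_j e_j† M` and `φ_j = e_j e_j† φ`. -/
def rwVec (p p₀ : ℝ) : {n : ℕ} → (Fin n → Bool) → (Fin 2 → ℝ)
  | 0, _ => rwφ p₀
  | n + 1, ξ =>
      ((List.ofFn fun i : Fin n => projR (ξ i.succ) * rwM p).reverse.prod).mulVec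
        ((projR (ξ 0)).mulVec (rwφ p₀))

/-- `p_L^{(n)}(j)`: the probability that the `(p₀,p)`-correlated random walk is at `j`
at time `n`, having arrived from the left. -/
def pL (p p₀ : ℝ) (n : ℕ) (j : ℤ) : ℝ :=
  ∑ ξ ∈ Finset.univ.filter (fun ξ : Fin n → Bool => pathSum ξ = j), rwVec p p₀ ξ 0

/-- `p_R^{(n)}(j)`: the probability that the `(p₀,p)`-correlated random walk is at `j`
at time `n`, having arrived from the right. -/
def pR (p p₀ : ℝ) (n : ℕ) (j : ℤ) : ℝ :=
  ∑ ξ ∈ Finset.univ.filter (fun ξ : Fin n → Bool => pathSum ξ = j), rwVec p p₀ ξ 1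


/-! Every weight `w(ξ)` of a path of length `n + 1` is a multiple of `e_{ξ_{n+1}}`, so `D_{A₀}` is
the full Gram matrix `W† W` of the weights, `W` being the `2 × 2ⁿ⁺¹` matrix with columns `w(ξ)`.
Hence `D_{A₀}` has the nonzero eigenvalues of the `2 × 2` matrix `W W† = ∑_ξ w(ξ) w(ξ)†`, and
`2ⁿ⁺¹ - 2` more zeros. Splitting off the last step shows that `W W†` at time `k + 1` is
`∑_j P_j (W W†) P_j†`, the diagonal part of `U (W W†) U†`. So from time `1` on `W W†` is diagonal,
and its diagonal evolves by the doubly stochastic matrix `[[p, q], [q, p]]` starting from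
`(q₀, p₀)`; diagonalising that matrix gives `ρ_R` and `ρ_L`. -/

namespace Matrix

open Polynomial in
theorem roots_charpoly_diagonal {R n : Type*} [CommRing R] [IsDomain R] [Fintype n]
    [DecidableEq n] (d : n → R) : (diagonal d).charpoly.roots = Finset.univ.val.map d := by
  rw [charpoly_diagonal, Finset.prod_eq_multiset_prod]
  simpa [Multiset.map_map] using roots_multiset_prod_X_sub_C (Finset.univ.val.map d)

open Polynomial in
theorem roots_charpoly_mul_comm_of_le {R m n : Type*} [CommRing R] [IsDomain R] [Fintype m]
    [Fintype n] [DecidableEq m] [DecidableEq n] (A : Matrix m n R) (B : Matrix n m R)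
    (h : Fintype.card n ≤ Fintype.card m) :
    (A * B).charpoly.roots =
      Multiset.replicate (Fintype.card m - Fintype.card n) 0 + (B * A).charpoly.roots := by
  rw [charpoly_mul_comm_of_le A B h, roots_mul ((monic_X_pow _).mul (charpoly_monic _)).ne_zero,
    roots_X_pow, Multiset.nsmul_singleton]

theorem mul_conjTranspose_eq_sum_vecMulVec {m n α : Type*} [Fintype n] [NonUnitalSemiring α]
    [StarRing α] (A : Matrix m n α) :
    A * Aᴴ = ∑ j, vecMulVec (fun i => A i j) (star fun i => A i j) := by
  ext i k
  simp [mul_apply, vecMulVec_apply, sum_apply]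

theorem mul_vecMulVec_star_mul_conjTranspose {l m α : Type*} [Fintype m] [CommSemiring α]
    [StarRing α] (M : Matrix l m α) (v : m → α) :
    M * vecMulVec v (star v) * Mᴴ = vecMulVec (M *ᵥ v) (star (M *ᵥ v)) := by
  rw [mul_vecMulVec, vecMulVec_mul, star_mulVec]

theorem sum_norm_sq_mulVec_of_mem_unitaryGroup {n : Type*} [Fintype n] [DecidableEq n]
    {U : Matrix n n ℂ} (hU : U ∈ unitaryGroup n ℂ) (v : n → ℂ) :
    ∑ i, ‖(U *ᵥ v) i‖ ^ 2 = ∑ i, ‖v i‖ ^ 2 := by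
  apply Complex.ofReal_injective
  push_cast
  simp_rw [← Complex.conj_mul']
  change star (U *ᵥ v) ⬝ᵥ (U *ᵥ v) = star v ⬝ᵥ v
  rw [star_mulVec, ← dotProduct_mulVec, mulVec_mulVec, ← star_eq_conjTranspose,
    mem_unitaryGroup_iff'.mp hU, one_mulVec]

theorem norm_sq_entries_of_mem_unitaryGroup_fin_two {a b c d : ℂ}
    (hU : !![a, b; c, d] ∈ unitaryGroup (Fin 2) ℂ) :
    ‖b‖ ^ 2 = 1 - ‖a‖ ^ 2 ∧ ‖c‖ ^ 2 = 1 - ‖a‖ ^ 2 ∧ ‖d‖ ^ 2 = ‖a‖ ^ 2 := by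
  have hrow := congrFun₂ (mem_unitaryGroup_iff.mp hU) 0 0
  have hcol₀ := congrFun₂ (mem_unitaryGroup_iff'.mp hU) 0 0
  have hcol₁ := congrFun₂ (mem_unitaryGroup_iff'.mp hU) 1 1
  simp [mul_apply, Fin.sum_univ_two, Complex.mul_conj', Complex.conj_mul'] at hrow hcol₀ hcol₁
  norm_cast at hrow hcol₀ hcol₁
  refine ⟨by linarith, by linarith, by linarith⟩

theorem mul_diagonal_mul_conjTranspose_apply_self {n : Type*} [Fintype n] [DecidableEq n]
    (U : Matrix n n ℂ) (g : n → ℝ) (i : n) :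
    (U * diagonal (fun j => (g j : ℂ)) * Uᴴ) i i = ((∑ j, ‖U i j‖ ^ 2 * g j : ℝ) : ℂ) := by
  push_cast
  simp only [mul_apply, diagonal_apply, conjTranspose_apply, mul_ite, mul_zero,
    Finset.sum_ite_eq', Finset.mem_univ, if_true]
  refine Finset.sum_congr rfl fun j _ => ?_
  rw [← Complex.mul_conj']
  simp only [RCLike.star_def]
  ring

end Matrix

-- `(1, 1)` and `(1, -1)` are eigenvectors of `rwM p` with eigenvalues `1` and `p - (1 - p)`.
theorem rwM_pow_mulVec_rwφ (p p₀ : ℝ) (n : ℕ) :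
    rwM p ^ n *ᵥ rwφ p₀ =
      ![(1 - (p - (1 - p)) ^ n * (p₀ - (1 - p₀))) / 2,
        (1 + (p - (1 - p)) ^ n * (p₀ - (1 - p₀))) / 2] := by
  induction n with
  | zero =>
    ext i
    fin_cases i <;> simp [rwφ] <;> ring
  | succ n ih =>
    rw [pow_succ', ← mulVec_mulVec, ih]
    ext i
    fin_cases i <;> simp [rwM] <;> ring

section Walk

variable (U : Matrix (Fin 2) (Fin 2) ℂ) (φ : Fin 2 → ℂ)

theorem weight_snoc {n : ℕ} (ξ : Fin n → Bool) (b : Bool) :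
    weight U φ (Fin.snoc ξ b) = pMat U b *ᵥ weight U φ ξ := by
  rw [weight, weight, List.ofFn_succ', List.concat_eq_append, List.reverse_append,
    List.reverse_singleton, List.singleton_append, List.prod_cons, ← mulVec_mulVec]
  simp only [Fin.snoc_castSucc, Fin.snoc_last]

theorem pMat_mulVec_apply_of_ne {b : Bool} {i : Fin 2} (hi : i ≠ bidx b) (v : Fin 2 → ℂ) :
    (pMat U b *ᵥ v) i = 0 := by
  rw [pMat, projC, ← mulVec_mulVec, single_mulVec, Function.update_of_ne hi, Pi.zero_apply]

theorem weight_apply_of_ne {n : ℕ} (ξ : Fin (n + 1) → Bool) {i : Fin 2}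
    (hi : i ≠ bidx (ξ (Fin.last n))) : weight U φ ξ i = 0 := by
  rw [← Fin.snoc_init_self ξ, weight_snoc]
  exact pMat_mulVec_apply_of_ne U hi _

theorem bidx_injective : Function.Injective bidx := by
  decide

theorem cdot_weight_of_ne {n : ℕ} {ξ η : Fin (n + 1) → Bool}
    (h : ξ (Fin.last n) ≠ η (Fin.last n)) : cdot (weight U φ ξ) (weight U φ η) = 0 := by
  refine Finset.sum_eq_zero fun i _ => ?_
  by_cases hi : i = bidx (ξ (Fin.last n))
  · rw [weight_apply_of_ne U φ η (hi ▸ bidx_injective.ne h), mul_zero]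
  · rw [weight_apply_of_ne U φ ξ hi, map_zero, zero_mul]

def weightMat (n : ℕ) : Matrix (Fin 2) (Fin n → Bool) ℂ :=
  of fun i ξ => weight U φ ξ i

theorem decMat_A0_eq (n : ℕ) :
    decMat U φ (A0 n) = (weightMat U φ (n + 1))ᴴ * weightMat U φ (n + 1) := by
  ext ξ η
  change _ = cdot (weight U φ ξ) (weight U φ η)
  rw [decMat, of_apply]
  split_ifs with h
  · rfl
  · exact (cdot_weight_of_ne U φ h).symm

theorem sum_pMat_mul_mul_conjTranspose (ρ : Matrix (Fin 2) (Fin 2) ℂ) :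
    ∑ b, pMat U b * ρ * (pMat U b)ᴴ = diagonal fun i => (U * ρ * Uᴴ) i i := by
  have hterm : ∀ b, pMat U b * ρ * (pMat U b)ᴴ =
      single (bidx b) (bidx b) ((U * ρ * Uᴴ) (bidx b) (bidx b)) := by
    intro b
    have hassoc : ∀ P : Matrix (Fin 2) (Fin 2) ℂ, P * U * ρ * (Uᴴ * P) = P * (U * ρ * Uᴴ) * P :=
      fun P => by simp only [Matrix.mul_assoc]
    rw [pMat, projC, conjTranspose_mul, conjTranspose_single, star_one, hassoc,
      single_mul_mul_single, one_mul, mul_one]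
  ext i j
  simp only [hterm, Fintype.sum_bool]
  fin_cases i <;> fin_cases j <;> simp [bidx]

theorem weightMat_mul_conjTranspose_zero :
    weightMat U φ 0 * (weightMat U φ 0)ᴴ = vecMulVec φ (star φ) := by
  simp [mul_conjTranspose_eq_sum_vecMulVec, weightMat, weight]

theorem weightMat_mul_conjTranspose_succ (n : ℕ) :
    weightMat U φ (n + 1) * (weightMat U φ (n + 1))ᴴ =
      diagonal fun i => (U * (weightMat U φ n * (weightMat U φ n)ᴴ) * Uᴴ) i i := by
  rw [← sum_pMat_mul_mul_conjTranspose, mul_conjTranspose_eq_sum_vecMulVec,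
    mul_conjTranspose_eq_sum_vecMulVec, ← (Fin.snocEquiv _).sum_comp, Fintype.sum_prod_type]
  simp_rw [Finset.mul_sum, Finset.sum_mul, mul_vecMulVec_star_mul_conjTranspose]
  refine Finset.sum_congr rfl fun b _ => Finset.sum_congr rfl fun ξ _ => ?_
  exact congrArg (fun v => vecMulVec v (star v)) (weight_snoc U φ ξ b)

end Walk

theorem weightMat_mul_conjTranspose_eq_diagonal {a b c d α β : ℂ}
    (hU : !![a, b; c, d] ∈ unitaryGroup (Fin 2) ℂ) (hφ : ‖α‖ ^ 2 + ‖β‖ ^ 2 = 1) (n : ℕ) :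
    weightMat !![a, b; c, d] ![α, β] (n + 1) * (weightMat !![a, b; c, d] ![α, β] (n + 1))ᴴ =
      diagonal fun i => ((rwM (‖a‖ ^ 2) ^ n *ᵥ rwφ (‖c * α + d * β‖ ^ 2)) i : ℂ) := by
  induction n with
  | zero =>
    have hmv : !![a, b; c, d] *ᵥ ![α, β] = ![a * α + b * β, c * α + d * β] := by
      ext i
      fin_cases i <;> simp [mulVec, dotProduct, Fin.sum_univ_two]
    have hnorm := sum_norm_sq_mulVec_of_mem_unitaryGroup hU ![α, β]
    simp only [hmv, Fin.sum_univ_two, cons_val_zero, cons_val_one, hφ] at hnorm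
    rw [weightMat_mul_conjTranspose_succ, weightMat_mul_conjTranspose_zero,
      mul_vecMulVec_star_mul_conjTranspose, pow_zero, one_mulVec]
    congr 1
    funext i
    rw [vecMulVec_apply, Pi.star_apply, RCLike.star_def, Complex.mul_conj', hmv]
    norm_cast
    fin_cases i
    · simp [rwφ, ← hnorm]
    · simp [rwφ]
  | succ n ih =>
    rw [weightMat_mul_conjTranspose_succ, ih]
    congr 1
    funext i
    rw [mul_diagonal_mul_conjTranspose_apply_self, pow_succ' (rwM _), ← mulVec_mulVec]
    obtain ⟨hb, hc, hd⟩ := norm_sq_entries_of_mem_unitaryGroup_fin_two hU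
    fin_cases i <;> simp [rwM, Fin.sum_univ_two, hb, hc, hd] <;> ring

theorem spec_decMat_A0_general
    (a b c d α β : ℂ)
    (hU : !![a, b; c, d] ∈ Matrix.unitaryGroup (Fin 2) ℂ)
    (hφ : ‖α‖ ^ 2 + ‖β‖ ^ 2 = 1)
    (p q p₀ q₀ : ℝ)
    (hp : p = ‖a‖ ^ 2) (hq : q = 1 - p)
    (hp₀ : p₀ = ‖c * α + d * β‖ ^ 2) (hq₀ : q₀ = 1 - p₀)
    (n : ℕ) :
    (decMat !![a, b; c, d] ![α, β] (A0 n)).charpoly.roots =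
      {(((1 + (p - q) ^ n * (p₀ - q₀)) / 2 : ℝ) : ℂ),
        (((1 - (p - q) ^ n * (p₀ - q₀)) / 2 : ℝ) : ℂ)} +
      Multiset.replicate (2 ^ (n + 1) - 2) 0 := by
  have hcard : Fintype.card (Fin 2) ≤ Fintype.card (Fin (n + 1) → Bool) := by
    simpa using Nat.le_self_pow (Nat.succ_ne_zero n) 2
  subst hp hq hp₀ hq₀
  rw [decMat_A0_eq, roots_charpoly_mul_comm_of_le _ _ hcard,
    weightMat_mul_conjTranspose_eq_diagonal hU hφ, roots_charpoly_diagonal, rwM_pow_mulVec_rwφ,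
    add_comm, Fin.univ_val_map, Multiset.pair_comm]
  congr 1
  simp

/-- the eigenvalues (with multiplicity) of `D_{A₀}` for paths of length `n+1`
are `ρ_L = (1 + (p−q)^n(p₀−q₀))/2`, `ρ_R = (1 − (p−q)^n(p₀−q₀))/2` and `0` with
multiplicity `2^{n+1} − 2`. -/
theorem spec_decMat_A0
    (a b c d α β : ℂ)
    (hU : !![a, b; c, d] ∈ Matrix.unitaryGroup (Fin 2) ℂ)
    (habcd : a * b * c * d ≠ 0)
    (hφ : ‖α‖ ^ 2 + ‖β‖ ^ 2 = 1)
    (p q p₀ q₀ : ℝ)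
    (hp : p = ‖a‖ ^ 2) (hq : q = 1 - p)
    (hp₀ : p₀ = ‖c * α + d * β‖ ^ 2) (hq₀ : q₀ = 1 - p₀)
    (n : ℕ) :
    (decMat !![a, b; c, d] ![α, β] (A0 n)).charpoly.roots =
      {(((1 + (p - q) ^ n * (p₀ - q₀)) / 2 : ℝ) : ℂ),
        (((1 - (p - q) ^ n * (p₀ - q₀)) / 2 : ℝ) : ℂ)} +
      Multiset.replicate (2 ^ (n + 1) - 2) 0 :=
  spec_decMat_A0_general a b c d α β hU hφ p q p₀ q₀ hp hq hp₀ hq₀ n
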